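/- arXiv:2507.13674 — 4 statements merged into one kernel-verified Lean document; each statement's English description precedes it below -/
import Mathlib

section
/- For every integer k ≥ 2 and every integer r ≥ 2 − k, the Binet-like formula F^(k)_r = Σ_{i=1}^{k} f_k(α_i) α_i^{r−1} holds, where α_1, …, α_k are the (complex) roots of Ψ_k and f_k(z) = (z − 1)/(2 + (k+1)(z − 2)). -/
/-- `kfib k j` is the `k`-generalized Fibonacci number `F⁽ᵏ⁾_n` with shifted index
`j = n + k - 2` (so `j = 0` corresponds to `n = 2 - k`).  Thus `kfib k j = 0` for
`0 ≤ j ≤ k - 2` (these are `F⁽ᵏ⁾_{2-k} = ⋯ = F⁽ᵏ⁾_0 = 0`), `kfib k (k - 1) = 1`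
(this is `F⁽ᵏ⁾_1 = 1`), and every later term is the sum of the preceding `k` terms
(junk value `0` if `k < 2`). -/
def kfib (k : ℕ) : ℕ → ℤ
  | j =>
    if k < 2 then 0
    else if j < k - 1 then 0
    else if j = k - 1 then 1
    else ∑ i ∈ Finset.range k, kfib k (j - 1 - i)
decreasing_by omega

open Polynomial Finset

private lemma kfib_aux_key (k : ℕ) (α : Fin k → ℂ) (hinj : Function.Injective α)
    (m : ℕ) (hm : m < k) :
    ∑ i, α i ^ m / ∏ j ∈ Finset.univ.erase i, (α i - α j) =
      if m = k - 1 then 1 else 0 := by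
  classical
  set w : Fin k → ℂ := fun i => ∏ j ∈ Finset.univ.erase i, (α i - α j) with hw
  have hw0 : ∀ i, w i ≠ 0 := by
    intro i
    rw [hw]
    refine Finset.prod_ne_zero_iff.2 fun j hj => ?_
    have : j ≠ i := (Finset.mem_erase.1 hj).1
    exact sub_ne_zero.2 fun h => this (hinj h.symm)
  set Q : Fin k → ℂ[X] := fun i => ∏ j ∈ Finset.univ.erase i, (X - C (α j)) with hQ
  have hQmonic : ∀ i, (Q i).Monic := fun i =>
    monic_prod_of_monic _ _ fun j _ => monic_X_sub_C _
  have hQdeg : ∀ i, (Q i).natDegree = k - 1 := by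
    intro i
    rw [hQ]
    rw [natDegree_prod _ _ fun j _ => X_sub_C_ne_zero (α j)]
    simp [Finset.card_erase_of_mem]
  have hQeval : ∀ t i, eval (α t) (Q i) = if t = i then w i else 0 := by
    intro t i
    rw [hQ, eval_prod]
    by_cases h : t = i
    · subst h; simp [hw]
    · rw [if_neg h]
      refine Finset.prod_eq_zero (Finset.mem_erase.2 ⟨h, Finset.mem_univ t⟩) ?_
      simp
  set P : ℂ[X] := X ^ m - ∑ i, C (α i ^ m / w i) * Q i with hP
  have hPeval : ∀ t, eval (α t) P = 0 := by
    intro t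
    rw [hP]
    simp only [eval_sub, eval_pow, eval_X, eval_finset_sum, eval_mul, eval_C]
    rw [Finset.sum_eq_single t]
    · rw [hQeval t t, if_pos rfl, div_mul_cancel₀ _ (hw0 t), sub_self]
    · intro i _ hit
      rw [hQeval t i, if_neg (fun h => hit h.symm), mul_zero]
    · simp
  have hPdeg : P.natDegree < k := by
    have h1 : (∑ i, C (α i ^ m / w i) * Q i).natDegree ≤ k - 1 := by
      refine Polynomial.natDegree_sum_le_of_forall_le _ _ fun i _ => ?_
      exact le_trans (natDegree_C_mul_le _ _) (le_of_eq (hQdeg i))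
    have h2 : (X ^ m : ℂ[X]).natDegree ≤ k - 1 := by
      rw [natDegree_X_pow]; omega
    have := natDegree_sub_le (X ^ m : ℂ[X]) (∑ i, C (α i ^ m / w i) * Q i)
    rw [← hP] at this
    omega
  have hP0 : P = 0 :=
    Polynomial.eq_zero_of_natDegree_lt_card_of_eval_eq_zero P hinj hPeval
      (by simpa using hPdeg)
  have hco := congrArg (fun p => Polynomial.coeff p (k - 1)) hP0
  simp only [hP, coeff_sub, coeff_zero, finset_sum_coeff, coeff_C_mul] at hco
  have hQco : ∀ i, (Q i).coeff (k - 1) = 1 := by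
    intro i
    have := (hQmonic i).coeff_natDegree
    rwa [hQdeg i] at this
  simp only [hQco, mul_one, coeff_X_pow] at hco
  rw [sub_eq_zero] at hco
  rw [← hco]
  by_cases h : m = k - 1 <;> simp [h, eq_comm]

private lemma kfib_aux_prod (k : ℕ) (hk : 2 ≤ k) (α : Fin k → ℂ) (hinj : Function.Injective α)
    (hroot : ∀ i, (α i) ^ k = ∑ j ∈ Finset.range k, (α i) ^ j) :
    (∏ i, (X - C (α i)) : ℂ[X]) = X ^ k - ∑ j ∈ Finset.range k, X ^ j := by
  classical
  set Ψ : ℂ[X] := ∏ i, (X - C (α i)) with hΨ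
  set P0 : ℂ[X] := X ^ k - ∑ j ∈ Finset.range k, X ^ j with hP0
  have hgdeg : (∑ j ∈ Finset.range k, (X:ℂ[X]) ^ j).degree < (k : ℕ) := by
    apply lt_of_le_of_lt (degree_sum_le _ _)
    rw [Finset.sup_lt_iff (by exact_mod_cast WithBot.bot_lt_coe k)]
    intro j hj
    exact lt_of_le_of_lt (degree_X_pow_le j) (by exact_mod_cast Finset.mem_range.1 hj)
  have hP0monic : P0.Monic := monic_X_pow_sub (by exact_mod_cast hgdeg)
  have hΨmonic : Ψ.Monic := monic_prod_of_monic _ _ fun i _ => monic_X_sub_C _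
  have hΨdeg : Ψ.natDegree = k := by
    rw [hΨ, natDegree_prod _ _ fun i _ => X_sub_C_ne_zero (α i)]
    simp
  have hP0deg : P0.natDegree = k := by
    rw [hP0]
    rw [natDegree_sub_eq_left_of_natDegree_lt]
    · exact natDegree_X_pow k
    · rw [natDegree_X_pow]
      by_cases h0 : (∑ j ∈ Finset.range k, (X:ℂ[X]) ^ j) = 0
      · rw [h0, natDegree_zero]
        omega
      · exact (natDegree_lt_iff_degree_lt h0).2 hgdeg
  by_cases hd : Ψ - P0 = 0
  · exact sub_eq_zero.1 hd
  · have hdeglt : (Ψ - P0).natDegree < k := by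
      have := degree_sub_lt (by rw [degree_eq_natDegree hΨmonic.ne_zero,
        degree_eq_natDegree hP0monic.ne_zero, hΨdeg, hP0deg]) hΨmonic.ne_zero
        (hΨmonic.leadingCoeff.trans hP0monic.leadingCoeff.symm)
      rw [degree_eq_natDegree hΨmonic.ne_zero, hΨdeg] at this
      exact (natDegree_lt_iff_degree_lt hd).2 this
    have heval : ∀ i, eval (α i) (Ψ - P0) = 0 := by
      intro i
      rw [eval_sub, hΨ, eval_prod]
      rw [Finset.prod_eq_zero (Finset.mem_univ i) (by simp)]
      simp [hP0, eval_finset_sum, hroot i]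
    have := Polynomial.eq_zero_of_natDegree_lt_card_of_eval_eq_zero _ hinj heval
      (by simpa using hdeglt)
    exact absurd this hd

private lemma kfib_aux_deriv (k : ℕ) (α : Fin k → ℂ) (hinj : Function.Injective α)
    (hΨeq : (∏ i, (X - C (α i)) : ℂ[X]) = X ^ k - ∑ j ∈ Finset.range k, X ^ j)
    (i : Fin k) :
    (α i - 1) * ∏ j ∈ Finset.univ.erase i, (α i - α j) =
      (k + 1) * α i ^ k - 2 * k * α i ^ (k - 1) := by
  classical
  let Ψ : ℂ[X] := ∏ i, (X - C (α i))
  have hΨ : Ψ = ∏ i, (X - C (α i)) := rfl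
  have hprod : (X - 1 : ℂ[X]) * Ψ = X ^ (k + 1) - 2 * X ^ k + 1 := by
    show (X - 1 : ℂ[X]) * (∏ i, (X - C (α i))) = _
    rw [hΨeq]
    have h := geom_sum_mul (X : ℂ[X]) k
    linear_combination -h
  have hder := congrArg derivative hprod
  simp only [derivative_mul, derivative_sub, derivative_add, derivative_one, derivative_X,
    derivative_ofNat, derivative_X_pow, zero_mul, zero_add, add_zero, one_mul] at hder
  have hev := congrArg (eval (α i)) hder
  simp only [eval_add, eval_sub, eval_mul, eval_one, eval_X, eval_C, eval_pow, eval_ofNat,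
    eval_zero, zero_mul, zero_add, add_zero, one_mul] at hev
  have hΨ0 : eval (α i) Ψ = 0 := by
    rw [hΨ, eval_prod]
    exact Finset.prod_eq_zero (Finset.mem_univ i) (by simp)
  have hΨ' : eval (α i) (derivative Ψ) = ∏ j ∈ Finset.univ.erase i, (α i - α j) := by
    have hmem : α i ∈ Multiset.map α Finset.univ.val :=
      Multiset.mem_map_of_mem _ (Finset.mem_def.1 (Finset.mem_univ i))
    have h1 : Ψ = (Multiset.map (fun a => X - C a) (Multiset.map α Finset.univ.val)).prod := by
      rw [hΨ, Finset.prod_eq_multiset_prod, Multiset.map_map]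
      rfl
    rw [h1, eval_multiset_prod_X_sub_C_derivative hmem]
    rw [← Multiset.map_erase _ hinj, Multiset.map_map]
    rw [Finset.prod_eq_multiset_prod, Finset.erase_val]
    rfl
  rw [hΨ0, hΨ'] at hev
  push_cast at hev ⊢
  linear_combination hev

private lemma kfib_aux_denom (k : ℕ) (hk : 2 ≤ k) (a : ℂ)
    (hroot : a ^ k = ∑ j ∈ Finset.range k, a ^ j) :
    (k + 1 : ℂ) * a - 2 * k ≠ 0 := by
  intro h
  have ha1 : a ≠ 1 := by
    intro h1
    rw [h1] at hroot
    simp at hroot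
    have : (k : ℂ) = 1 := by simpa using hroot.symm
    have : k = 1 := by exact_mod_cast this
    omega
  have h1 : a ^ (k + 1) - 2 * a ^ k + 1 = 0 := by
    have hg := geom_sum_mul a k
    linear_combination (a - 1) * hroot + hg
  have h3 : ((k : ℂ) + 1) ^ k * a ^ k = 2 ^ k * k ^ k := by
    have : ((k : ℂ) + 1) * a = 2 * k := by linear_combination h
    calc ((k : ℂ) + 1) ^ k * a ^ k = (((k:ℂ) + 1) * a) ^ k := by rw [mul_pow]
      _ = (2 * (k:ℂ)) ^ k := by rw [this]
      _ = 2 ^ k * k ^ k := by rw [mul_pow]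
  have h4 : 2 * a ^ k = (k : ℂ) + 1 := by
    linear_combination a ^ k * h - ((k : ℂ) + 1) * h1
  have h5 : (2 : ℂ) ^ (k + 1) * k ^ k = ((k : ℂ) + 1) ^ (k + 1) := by
    linear_combination ((k:ℂ) + 1) ^ k * h4 - 2 * h3
  have h6 : 2 ^ (k + 1) * k ^ k = (k + 1) ^ (k + 1) := by
    have := h5
    push_cast at this
    exact_mod_cast this
  have hco : Nat.Coprime (k ^ k) ((k + 1) ^ (k + 1)) :=
    Nat.Coprime.pow k (k+1) (Nat.coprime_self_add_right.mpr (Nat.coprime_one_right k))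
  have hdvd : k ^ k ∣ (k + 1) ^ (k + 1) := h6 ▸ dvd_mul_left _ _
  have h7 : k ^ k = 1 := Nat.Coprime.eq_one_of_dvd hco hdvd
  have : 1 < k ^ k := Nat.one_lt_pow (by omega) (by omega)
  omega


/-- Binet-like formula: for `k ≥ 2` and every integer `r ≥ 2 - k`,
`F⁽ᵏ⁾_r = ∑ᵢ f_k(αᵢ) αᵢ^(r-1)`, where `α₁, …, α_k` are the `k` distinct complex
roots of `Ψₖ` and `f_k(z) = (z - 1)/(2 + (k+1)(z - 2))`. -/
theorem kfib_binet (k : ℕ) (hk : 2 ≤ k) (α : Fin k → ℂ) (hinj : Function.Injective α)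
    (hroot : ∀ i, (α i) ^ k = ∑ j ∈ Finset.range k, (α i) ^ j)
    (r : ℤ) (hr : 2 - (k : ℤ) ≤ r) :
    (kfib k (r + k - 2).toNat : ℂ) =
      ∑ i, (α i - 1) / (2 + (k + 1) * (α i - 2)) * (α i) ^ (r - 1) := by
  classical
  have ha0 : ∀ i, α i ≠ 0 := by
    intro i h0
    have := hroot i
    rw [h0] at this
    rw [zero_pow (by omega : k ≠ 0), Finset.sum_eq_single 0 (fun j _ hj => zero_pow hj)
      (fun h => (h (Finset.mem_range.mpr (by omega))).elim)] at this
    simp at this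
  have hw0 : ∀ i, (∏ j ∈ Finset.univ.erase i, (α i - α j)) ≠ 0 := by
    intro i
    refine Finset.prod_ne_zero_iff.2 fun j hj => ?_
    have : j ≠ i := (Finset.mem_erase.1 hj).1
    exact sub_ne_zero.2 fun h => this (hinj h.symm)
  have hden : ∀ i, (2 : ℂ) + (k + 1) * (α i - 2) ≠ 0 := by
    intro i h
    exact kfib_aux_denom k hk (α i) (hroot i) (by linear_combination h)
  -- the coefficient identity
  have hc : ∀ i, (α i - 1) / (2 + (k + 1) * (α i - 2)) =
      α i ^ (k - 1) / ∏ j ∈ Finset.univ.erase i, (α i - α j) := by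
    intro i
    rw [div_eq_div_iff (hden i) (hw0 i)]
    have hD := kfib_aux_deriv k α hinj (kfib_aux_prod k hk α hinj hroot) i
    have hpow : α i ^ k = α i ^ (k - 1) * α i := by
      rw [← pow_succ]
      congr 1
      omega
    rw [hpow] at hD
    linear_combination hD
  -- G satisfies the initial conditions
  have hbase : ∀ s : ℤ, 2 - (k : ℤ) ≤ s → s ≤ 1 →
      ∑ i, (α i - 1) / (2 + (k + 1) * (α i - 2)) * (α i) ^ (s - 1) =
        if s = 1 then 1 else 0 := by
    intro s hs1 hs2
    have hm : ∃ m : ℕ, (m : ℤ) = s + k - 2 ∧ m < k := by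
      refine ⟨(s + k - 2).toNat, ?_, ?_⟩ <;> omega
    obtain ⟨m, hm1, hm2⟩ := hm
    have h1 : ∀ i, (α i - 1) / (2 + (k + 1) * (α i - 2)) * (α i) ^ (s - 1) =
        α i ^ m / ∏ j ∈ Finset.univ.erase i, (α i - α j) := by
      intro i
      rw [hc i]
      have : (α i : ℂ) ^ (s - 1) = α i ^ m * (α i ^ (k - 1))⁻¹ := by
        have : s - 1 = (m : ℤ) - ((k - 1 : ℕ) : ℤ) := by omega
        rw [this, zpow_sub₀ (ha0 i), zpow_natCast, zpow_natCast, div_eq_mul_inv]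
      rw [this]
      have hcancel : α i ^ (k - 1) * (α i)⁻¹ ^ (k - 1) = 1 := by
        rw [← mul_pow, mul_inv_cancel₀ (ha0 i), one_pow]
      field_simp
      linear_combination α i ^ m * (∏ x ∈ Finset.univ.erase i, (α i - α x))⁻¹ * hcancel
    rw [Finset.sum_congr rfl fun i _ => h1 i, kfib_aux_key k α hinj m hm2]
    have : m = k - 1 ↔ s = 1 := by omega
    simp [this]
  -- the recurrence for G
  have hrec : ∀ s : ℤ,
      ∑ i, (α i - 1) / (2 + (k + 1) * (α i - 2)) * (α i) ^ (s - 1) =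
        ∑ t ∈ Finset.range k, ∑ i, (α i - 1) / (2 + (k + 1) * (α i - 2)) *
          (α i) ^ (s - 1 - (t : ℤ) - 1) := by
    intro s
    rw [Finset.sum_comm]
    refine Finset.sum_congr rfl fun i _ => ?_
    rw [← Finset.mul_sum]
    congr 1
    have key : (α i : ℂ) ^ (s - 1) = ∑ t ∈ Finset.range k, α i ^ (s - 2 - (t : ℤ)) := by
      have h2 : (α i : ℂ) ^ (s - 1) = α i ^ (s - 1 - k) * α i ^ (k : ℕ) := by
        rw [← zpow_natCast (α i) k, ← zpow_add₀ (ha0 i)]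
        congr 1
        ring
      rw [h2, hroot i, Finset.mul_sum]
      have h3 : ∀ j ∈ Finset.range k, α i ^ (s - 1 - k) * α i ^ j =
          α i ^ (s - 2 - ((k - 1 - j : ℕ) : ℤ)) := by
        intro j hj
        have hj' : j < k := Finset.mem_range.1 hj
        rw [← zpow_natCast (α i) j, ← zpow_add₀ (ha0 i)]
        congr 1
        have : ((k - 1 - j : ℕ) : ℤ) = (k : ℤ) - 1 - j := by omega
        rw [this]
        ring
      rw [Finset.sum_congr rfl h3, Finset.sum_range_reflect (fun t => α i ^ (s - 2 - (t : ℤ))) k]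
    rw [key]
    refine Finset.sum_congr rfl fun t _ => ?_
    congr 1
    ring
  -- main induction
  suffices H : ∀ m : ℕ, ∀ s : ℤ, 2 - (k : ℤ) ≤ s → (s + k - 2).toNat = m →
      (kfib k m : ℂ) = ∑ i, (α i - 1) / (2 + (k + 1) * (α i - 2)) * (α i) ^ (s - 1) by
    exact H _ r hr rfl
  intro m
  induction m using Nat.strong_induction_on with
  | _ m ih =>
    intro s hs hsm
    by_cases hbig : m < k
    · -- base case
      have hs2 : s ≤ 1 := by omega
      rw [hbase s hs hs2, kfib]
      have h1 : ¬ k < 2 := by omega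
      rw [if_neg h1]
      by_cases h2 : s = 1
      · have : m = k - 1 := by omega
        rw [this, if_neg (by omega), if_pos rfl, if_pos h2]
        norm_num
      · have : m < k - 1 := by omega
        rw [if_pos this, if_neg h2]
        norm_num
    · -- inductive step
      push_neg at hbig
      have hs2 : 2 ≤ s := by omega
      rw [kfib]
      rw [if_neg (by omega : ¬ k < 2), if_neg (by omega : ¬ m < k - 1),
        if_neg (by omega : ¬ m = k - 1)]
      rw [hrec s]
      push_cast
      refine Finset.sum_congr rfl fun t ht => ?_
      have ht' : t < k := Finset.mem_range.1 ht
      have := ih (m - 1 - t) (by omega) (s - 1 - t) (by omega) (by omega)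
      exact this
end

section
/- For every integer k ≥ 2, one has 1/2 < f_k(α) < 3/4, where α = α(k) is the dominant root of Ψ_k; moreover |f_k(α_i)| < 1 for every root α_i of Ψ_k with |α_i| < 1. -/
private lemma aux_3k (k : ℕ) (hk : 3 ≤ k) : 3 * k ≤ 2 ^ k + 1 := by
  induction k with
  | zero => omega
  | succ n ih =>
    rcases Nat.lt_or_ge n 3 with h | h
    · interval_cases n <;> simp_all
    · have h2 : 8 ≤ 2 ^ n := by
        calc (8:ℕ) = 2 ^ 3 := by norm_num
        _ ≤ 2 ^ n := Nat.pow_le_pow_right (by norm_num) h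
      have := ih h
      have : 2 ^ (n+1) = 2 * 2 ^ n := by ring
      omega

set_option maxHeartbeats 1000000 in
/-- For every integer `k ≥ 2`, one has `1/2 < f_k(α) < 3/4`, where `α` is the dominant
root of `Ψₖ`; moreover `|f_k(αᵢ)| < 1` for every root `αᵢ` of `Ψₖ` with `|αᵢ| < 1`.
Here `f_k(z) = (z - 1)/(2 + (k+1)(z - 2))`. -/
theorem fk_bounds (k : ℕ) (hk : 2 ≤ k) (α : ℝ) (hα : 1 < α)
    (hroot : α ^ k = ∑ i ∈ Finset.range k, α ^ i) :
    (1 / 2 < (α - 1) / (2 + (k + 1) * (α - 2)) ∧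
      (α - 1) / (2 + (k + 1) * (α - 2)) < 3 / 4) ∧
    ∀ z : ℂ, z ^ k = ∑ i ∈ Finset.range k, z ^ i → ‖z‖ < 1 →
      ‖(z - 1) / (2 + (k + 1) * (z - 2))‖ < 1 := by
  have hkR : (2:ℝ) ≤ (k:ℝ) := by exact_mod_cast hk
  constructor
  · -- real part
    have hα0 : (0:ℝ) < α := by linarith
    have hgm : α ^ k * (α - 1) = α ^ k - 1 := by
      have := geom_sum_mul α k
      rwa [← hroot] at this
    have hA1 : α ^ k * (2 - α) = 1 := by linear_combination -hgm
    have hApos : 0 < α ^ k := pow_pos hα0 k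
    have hα2 : α < 2 := by nlinarith
    have ht0 : 0 < 2 - α := by linarith
    have hAk : (k:ℝ) < α ^ k := by
      rw [hroot]
      calc (k:ℝ) = ∑ _i ∈ Finset.range k, (1:ℝ) := by simp
        _ < ∑ i ∈ Finset.range k, α ^ i := by
          apply Finset.sum_lt_sum
          · intro i _
            exact one_le_pow₀ hα.le
          · exact ⟨1, Finset.mem_range.mpr (by omega), by simpa using hα⟩
    have htk : (2 - α) * (k:ℝ) < 1 := by
      calc (2 - α) * (k:ℝ) < (2 - α) * α ^ k := by
            exact mul_lt_mul_of_pos_left hAk ht0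
        _ = 1 := by linarith [hA1]
    -- Bernoulli step
    have hb : 1 + (k:ℝ) * (-((2 - α)/2)) ≤ (1 + (-((2 - α)/2))) ^ k :=
      one_add_mul_le_pow (by nlinarith) k
    have h2 : (2:ℝ)^k * (1 - (k:ℝ) * (2 - α) / 2) ≤ α ^ k := by
      calc (2:ℝ)^k * (1 - (k:ℝ) * (2 - α) / 2)
          = 2^k * (1 + (k:ℝ) * (-((2 - α)/2))) := by ring
        _ ≤ 2^k * (1 + (-((2 - α)/2)))^k := by
            apply mul_le_mul_of_nonneg_left hb (by positivity)
        _ = (2 * (1 + (-((2 - α)/2))))^k := (mul_pow 2 _ k).symm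
        _ = α ^ k := by congr 1; ring
    have h3 : (2 - α) * ((2:ℝ)^k * (1 - (k:ℝ) * (2 - α) / 2)) ≤ 1 := by
      calc (2 - α) * ((2:ℝ)^k * (1 - (k:ℝ) * (2 - α) / 2))
          ≤ (2 - α) * α ^ k := mul_le_mul_of_nonneg_left h2 ht0.le
        _ = 1 := by linarith [hA1]
    have hPpos : (0:ℝ) < 2^(k-1) := by positivity
    have h2k : (2:ℝ)^k = 2 * 2^(k-1) := by
      rw [← pow_succ']
      congr 1
      omega
    have hP : (2:ℝ)^(k-1) * (2 - α) < 1 := by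
      nlinarith [mul_pos ht0 hPpos, mul_lt_mul_of_pos_right htk (mul_pos ht0 hPpos)]
    have hk2P : (k:ℝ) + 1 ≤ 2 * 2^(k-1) := by
      rw [← h2k]
      have h' : k + 1 ≤ 2^k := Nat.lt_two_pow_self
      exact_mod_cast h'
    have hd : 0 < 2 + ((k:ℝ) + 1) * (α - 2) := by nlinarith
    constructor
    · rw [lt_div_iff₀ hd]
      nlinarith [mul_pos ht0 (show (0:ℝ) < (k:ℝ) - 1 by linarith)]
    · rw [div_lt_iff₀ hd]
      -- suffices (3k-1)(2-α) < 2
      have key : (3 * (k:ℝ) - 1) * (2 - α) < 2 := by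
        rcases eq_or_lt_of_le hk with h2eq | h3le
        · -- k = 2
          have hk2 : k = 2 := h2eq.symm
          subst hk2
          have hA2 : α ^ 2 * (2 - α) = 1 := hA1
          have hfac : (α - 1) * (α^2 - α - 1) = 0 := by linear_combination -hA2
          have hφ : α^2 = α + 1 := by
            rcases mul_eq_zero.mp hfac with h | h
            · exfalso; linarith
            · linarith
          have h85 : (8:ℝ)/5 < α := by nlinarith [sq_nonneg (α + 3/5), hφ, hα]
          push_cast
          linarith
        · -- k ≥ 3
          have h3 : 3 ≤ k := h3le
          have := aux_3k k h3
          have h3R : 3 * (k:ℝ) ≤ 2^k + 1 := by exact_mod_cast this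
          have : (3 * (k:ℝ) - 1) * (2 - α) ≤ (2 * 2^(k-1)) * (2 - α) := by
            apply mul_le_mul_of_nonneg_right _ ht0.le
            rw [← h2k]; linarith
          nlinarith
      nlinarith
  · -- complex part
    intro z hz hz1
    have hgm : z ^ k * (z - 1) = z ^ k - 1 := by
      have := geom_sum_mul z k
      rwa [← hz] at this
    have h1 : z ^ k * (2 - z) = 1 := by linear_combination -hgm
    have habs : ‖z‖^k * ‖2 - z‖ = 1 := by
      rw [← norm_pow, ← norm_mul, h1, norm_one]
    have hzk : ‖z‖^k < 1 :=
      pow_lt_one₀ (norm_nonneg z) hz1 (by omega)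
    have hzknn : 0 ≤ ‖z‖^k := pow_nonneg (norm_nonneg z) k
    have hw : 1 < ‖2 - z‖ := by
      by_contra h
      push_neg at h
      nlinarith [norm_nonneg (2 - z)]
    set s := ‖2 - z‖ with hs
    have hre : 2 - z.re ≤ s := by
      have := Complex.re_le_norm (2 - z)
      simpa using this
    have hs2 : (2 - z.re)^2 + z.im^2 = s^2 := by
      rw [hs, Complex.sq_norm, Complex.normSq_apply]
      simp
      ring
    have key : ‖z - 1‖ < ‖2 + ((k:ℂ) + 1) * (z - 2)‖ := by
      apply lt_of_pow_lt_pow_left₀ 2 (norm_nonneg _)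
      rw [Complex.sq_norm, Complex.sq_norm, Complex.normSq_apply, Complex.normSq_apply]
      simp only [Complex.add_re, Complex.add_im, Complex.mul_re, Complex.mul_im,
        Complex.sub_re, Complex.sub_im, Complex.one_re, Complex.one_im,
        Complex.re_ofNat, Complex.im_ofNat, Complex.natCast_re, Complex.natCast_im]
      have hs2K : ((k:ℝ)^2 + 2*(k:ℝ)) * ((2 - z.re)^2 + z.im^2) = ((k:ℝ)^2 + 2*(k:ℝ)) * s^2 := by
        rw [hs2]
      have hKs : 0 < (k:ℝ) * s - 1 := by nlinarith
      have hK2s : 0 < ((k:ℝ) + 2) * s - 3 := by nlinarith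
      nlinarith [hs2K, mul_pos hKs hK2s, mul_nonneg (show (0:ℝ) ≤ 4*(k:ℝ)+2 by linarith)
        (show (0:ℝ) ≤ s - (2 - z.re) by linarith), sq_nonneg z.im]
    have hDpos : 0 < ‖2 + ((k:ℂ) + 1) * (z - 2)‖ :=
      lt_of_le_of_lt (norm_nonneg _) key
    rw [norm_div]
    exact (div_lt_one hDpos).mpr key
end

section
/- For every integer k ≥ 2 and every integer r ≥ 2 − k, the inequality |F^(k)_r − f_k(α) α^{r−1}| < 1/2 holds, where α = α(k) is the dominant root of Ψ_k and f_k(z) = (z − 1)/(2 + (k+1)(z − 2)). -/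
lemma kfib_small (k j : ℕ) (hk : 2 ≤ k) (hj : j < k - 1) : kfib k j = 0 := by
  rw [kfib]; simp [Nat.not_lt.mpr hk, hj]

lemma kfib_init (k : ℕ) (hk : 2 ≤ k) : kfib k (k - 1) = 1 := by
  rw [kfib]; simp [Nat.not_lt.mpr hk]

lemma kfib_rec (k j : ℕ) (hk : 2 ≤ k) (hj : k ≤ j) :
    kfib k j = ∑ i ∈ Finset.range k, kfib k (j - 1 - i) := by
  rw [kfib]
  have h1 : ¬ k < 2 := Nat.not_lt.mpr hk
  have h2 : ¬ j < k - 1 := by omega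
  have h3 : ¬ j = k - 1 := by omega
  simp [h1, h2, h3]

lemma kfib_prec (k j : ℕ) (hk : 2 ≤ k) (hj : k ≤ j) :
    kfib k (j + 1) = 2 * kfib k j - kfib k (j - k) := by
  have hk' : k - 1 + 1 = k := by omega
  have h1 := kfib_rec k (j+1) hk (by omega)
  have h2 := kfib_rec k j hk hj
  have e1 : ∑ i ∈ Finset.range k, kfib k (j + 1 - 1 - i)
      = (∑ i ∈ Finset.range (k-1), kfib k (j - 1 - i)) + kfib k j := by
    have h := Finset.sum_range_succ' (fun i => kfib k (j - i)) (k-1)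
    rw [hk'] at h
    calc ∑ i ∈ Finset.range k, kfib k (j + 1 - 1 - i)
        = ∑ i ∈ Finset.range k, kfib k (j - i) := by
          exact Finset.sum_congr rfl fun i hi => congrArg (kfib k) (by omega)
      _ = (∑ i ∈ Finset.range (k-1), kfib k (j - (i+1))) + kfib k (j - 0) := h
      _ = (∑ i ∈ Finset.range (k-1), kfib k (j - 1 - i)) + kfib k j := by
          congr 1
          exact Finset.sum_congr rfl fun i hi => congrArg (kfib k) (by omega)
  have e2 : ∑ i ∈ Finset.range k, kfib k (j - 1 - i)
      = (∑ i ∈ Finset.range (k-1), kfib k (j - 1 - i)) + kfib k (j - k) := by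
    have h := Finset.sum_range_succ (fun i => kfib k (j - 1 - i)) (k-1)
    rw [hk'] at h
    rw [h]; congr 1; exact congrArg (kfib k) (by omega)
  rw [h1, e1, h2, e2]; ring

lemma kfib_at_k (k : ℕ) (hk : 2 ≤ k) : kfib k k = 1 := by
  rw [kfib_rec k k hk le_rfl]
  rw [Finset.sum_eq_single_of_mem 0 (Finset.mem_range.mpr (by omega))]
  · simpa using kfib_init k hk
  · intro i hi hne
    exact kfib_small k _ hk (by simp at hi; omega)

/-- The "error term" `F_n - f α^{n-1}` in shifted indexing. -/
noncomputable def Ef (k : ℕ) (α f : ℝ) (j : ℕ) : ℝ :=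
  (kfib k j : ℝ) - f * α ^ ((j : ℤ) + 1 - k)

lemma Ef_star (k : ℕ) (α f : ℝ) (hk : 2 ≤ k) (hα : 1 < α)
    (hk1 : α ^ k * α = 2 * α ^ k - 1)
    (hfD : f * (((k : ℝ) + 1) * α - 2 * k) = α - 1) :
    ∀ j, k ≤ j → Ef k α f j
      = (2 - α) * ∑ i ∈ Finset.range k, α ^ i * Ef k α f (j - 1 - i) := by
  have hα0 : (0:ℝ) < α := by linarith
  have hαne : α ≠ 0 := ne_of_gt hα0
  have hk' : k - 1 + 1 = k := by omega
  have hz : ∀ m : ℤ, α ^ (m + 1) = 2 * α ^ m - α ^ (m - (k:ℤ)) := by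
    intro m
    have e1 : α ^ (m + 1) = α ^ (m - (k:ℤ)) * α ^ ((k:ℤ) + 1) := by
      rw [← zpow_add₀ hαne]; congr 1; ring
    have e2 : α ^ m = α ^ (m - (k:ℤ)) * α ^ (k:ℤ) := by
      rw [← zpow_add₀ hαne]; congr 1; ring
    have e3 : α ^ ((k:ℤ) + 1) = 2 * α ^ (k:ℤ) - 1 := by
      rw [zpow_add_one₀ hαne, zpow_natCast]
      linarith [hk1]
    rw [e1, e3, e2]; ring
  have hunit : (2 - α) * α ^ k = 1 := by linarith [hk1]
  intro j hj
  induction j, hj using Nat.le_induction with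
  | base =>
    -- j = k
    have lhs : Ef k α f k = 1 - f * α := by
      unfold Ef
      rw [kfib_at_k k hk]
      have : ((k:ℤ) + 1 - k) = 1 := by ring
      rw [this, zpow_one]
      push_cast; ring
    have term0 : α ^ 0 * Ef k α f (k - 1 - 0) = 1 - f := by
      unfold Ef
      rw [pow_zero, one_mul]
      have h1 : k - 1 - 0 = k - 1 := rfl
      rw [h1, kfib_init k hk]
      have h2 : (((k-1:ℕ):ℤ) + 1 - k) = 0 := by omega
      rw [h2, zpow_zero]
      push_cast; ring
    have termi : ∀ i < k - 1, α ^ (i+1) * Ef k α f (k - 1 - (i+1)) = -f := by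
      intro i hi
      unfold Ef
      rw [kfib_small k _ hk (by omega)]
      have h2 : (((k - 1 - (i+1):ℕ):ℤ) + 1 - k) = -((i:ℤ)+1) := by omega
      rw [h2]
      have h3 : α ^ (-((i:ℤ)+1)) = (α ^ (i+1))⁻¹ := by
        rw [← zpow_natCast α (i+1), ← zpow_neg]
        norm_num
      rw [h3]
      field_simp
      try ring
    have hsum : ∑ i ∈ Finset.range k, α ^ i * Ef k α f (k - 1 - i)
        = (1 - f) + ((k:ℝ) - 1) * (-f) := by
      have h := Finset.sum_range_succ' (fun i => α ^ i * Ef k α f (k - 1 - i)) (k-1)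
      rw [hk'] at h
      rw [h, term0]
      have : ∑ i ∈ Finset.range (k-1), α ^ (i+1) * Ef k α f (k - 1 - (i+1))
          = ∑ i ∈ Finset.range (k-1), (-f) := by
        refine Finset.sum_congr rfl fun i hi => termi i (Finset.mem_range.mp hi)
      rw [this, Finset.sum_const, Finset.card_range]
      have hc : ((k - 1 : ℕ) : ℝ) = (k:ℝ) - 1 := by
        push_cast [Nat.cast_sub (by omega : 1 ≤ k)]; ring
      rw [nsmul_eq_mul, hc]; ring
    rw [lhs, hsum]
    linear_combination -hfD
  | succ j hj IH =>
    -- p-recurrence for Ef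
    have hcast : ((j - k : ℕ) : ℤ) = (j:ℤ) - k := by omega
    have hp : Ef k α f (j + 1) = 2 * Ef k α f j - Ef k α f (j - k) := by
      unfold Ef
      have hprec : ((kfib k (j+1) : ℝ)) = 2 * (kfib k j : ℝ) - (kfib k (j-k) : ℝ) := by
        have := kfib_prec k j hk hj
        push_cast [this]; ring
      rw [hprec, hcast]
      have hm := hz ((j:ℤ) + 1 - k)
      push_cast
      have e1 : ((j:ℤ) + 1) + 1 - k = ((j:ℤ) + 1 - k) + 1 := by ring
      have e2 : ((j:ℤ) - k) + 1 - k = ((j:ℤ) + 1 - k) - k := by ring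
      rw [e1, e2, hm]
      ring
    have hmulA : ∑ i ∈ Finset.range (k-1), α ^ (i+1) * Ef k α f (j - 1 - i)
        = α * ∑ i ∈ Finset.range (k-1), α ^ i * Ef k α f (j - 1 - i) := by
      rw [Finset.mul_sum]
      exact Finset.sum_congr rfl fun i hi => by ring
    have split1 : ∑ i ∈ Finset.range k, α ^ i * Ef k α f (j + 1 - 1 - i)
        = (∑ i ∈ Finset.range (k-1), α ^ (i+1) * Ef k α f (j - 1 - i)) + Ef k α f j := by
      have h := Finset.sum_range_succ' (fun i => α ^ i * Ef k α f (j - i)) (k-1)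
      rw [hk'] at h
      calc ∑ i ∈ Finset.range k, α ^ i * Ef k α f (j + 1 - 1 - i)
          = ∑ i ∈ Finset.range k, α ^ i * Ef k α f (j - i) := by
            exact Finset.sum_congr rfl fun i hi => by rw [show j + 1 - 1 - i = j - i by omega]
        _ = (∑ i ∈ Finset.range (k-1), α ^ (i+1) * Ef k α f (j - (i+1))) + α ^ 0 * Ef k α f (j - 0) := h
        _ = _ := by
            rw [pow_zero, one_mul, Nat.sub_zero]
            congr 1
            exact Finset.sum_congr rfl fun i hi => by rw [show j - (i+1) = j - 1 - i by omega]
    have hS2 : (∑ i ∈ Finset.range (k-1), α ^ i * Ef k α f (j - 1 - i))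
        = (∑ i ∈ Finset.range k, α ^ i * Ef k α f (j - 1 - i)) - α ^ (k-1) * Ef k α f (j - k) := by
      have h := Finset.sum_range_succ (fun i => α ^ i * Ef k α f (j - 1 - i)) (k-1)
      rw [hk'] at h
      rw [h, show j - 1 - (k-1) = j - k by omega]
      ring
    have hpow : α * α ^ (k-1) = α ^ k := by
      rw [← pow_succ', hk']
    rw [hp, split1]
    linear_combination (-(2-α)) * hmulA + (-(α*(2-α))) * hS2 + α * IH
      + (Ef k α f (j - k)) * hunit + ((2-α) * Ef k α f (j - k)) * hpow

lemma Ef_abs_lt (k : ℕ) (hk : 2 ≤ k) (α : ℝ) (hα : 1 < α)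
    (hroot : α ^ k = ∑ i ∈ Finset.range k, α ^ i) :
    ∀ j : ℕ, |Ef k α ((α - 1) / (2 + ((k:ℝ) + 1) * (α - 2))) j| < 1/2 := by
  have hα0 : (0:ℝ) < α := by linarith
  have hαne : α ≠ 0 := ne_of_gt hα0
  have hkr : (2:ℝ) ≤ (k:ℝ) := by exact_mod_cast hk
  -- basic consequences of the root equation
  have hgeo : (∑ i ∈ Finset.range k, α ^ i) * (α - 1) = α ^ k - 1 := geom_sum_mul α k
  have h' : α ^ k * (α - 1) = α ^ k - 1 := by rw [← hroot] at hgeo; exact hgeo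
  have hk1 : α ^ k * α = 2 * α ^ k - 1 := by linear_combination h'
  have hpk : (0:ℝ) < α ^ k := pow_pos hα0 k
  have h2 : α < 2 := by nlinarith [hk1, hpk]
  have hunit : (2 - α) * α ^ k = 1 := by linear_combination -hk1
  -- lower bound for the geometric sum
  have hsum_lb : 1 + α + ((k:ℝ) - 2) * α ^ 2 ≤ ∑ i ∈ Finset.range k, α ^ i := by
    have hsplit : (∑ i ∈ Finset.Ico 0 2, α ^ i) + ∑ i ∈ Finset.Ico 2 k, α ^ i
        = ∑ i ∈ Finset.Ico 0 k, α ^ i :=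
      Finset.sum_Ico_consecutive _ (by omega) (by omega)
    have h02 : (∑ i ∈ Finset.range 2, α ^ i) = 1 + α := by
      simp [Finset.sum_range_succ]
    have hlb : ((k:ℝ) - 2) * α ^ 2 ≤ ∑ i ∈ Finset.Ico 2 k, α ^ i := by
      have : ∀ i ∈ Finset.Ico 2 k, α ^ 2 ≤ α ^ i := by
        intro i hi
        exact pow_le_pow_right₀ (le_of_lt hα) (Finset.mem_Ico.mp hi).1
      calc ((k:ℝ) - 2) * α ^ 2 = ((k - 2 : ℕ) : ℝ) * α ^ 2 := by
            rw [Nat.cast_sub hk]; norm_num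
        _ = ∑ _i ∈ Finset.Ico 2 k, α ^ 2 := by
            rw [Finset.sum_const, Nat.card_Ico, nsmul_eq_mul]
        _ ≤ _ := Finset.sum_le_sum this
    rw [← Finset.range_eq_Ico, ← Finset.range_eq_Ico] at hsplit
    rw [← hsplit, h02]
    linarith
  have h2f : ((k:ℝ) + 1) * α < 2 * α ^ k := by
    rw [hroot]
    have hq : (0:ℝ) ≤ ((k:ℝ) - 2) * (α ^ 2 - α) := by
      apply mul_nonneg (by linarith)
      nlinarith
    nlinarith [hsum_lb, hq]
  have h3 : ((k:ℝ) + 1) * α * (2 - α) < 2 := by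
    have h4 := mul_lt_mul_of_pos_right h2f (show (0:ℝ) < 2 - α by linarith)
    nlinarith [h4, hunit]
  have hD : 0 < 2 + ((k:ℝ) + 1) * (α - 2) := by
    nlinarith [h3, mul_nonneg (show (0:ℝ) ≤ ((k:ℝ)+1)*(2-α) by nlinarith)
      (show (0:ℝ) ≤ α - 1 by linarith)]
  set f := (α - 1) / (2 + ((k:ℝ) + 1) * (α - 2)) with hf
  have hfD : f * (((k : ℝ) + 1) * α - 2 * k) = α - 1 := by
    have : f * (2 + ((k:ℝ) + 1) * (α - 2)) = α - 1 := div_mul_cancel₀ _ (ne_of_gt hD)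
    linear_combination this
  have hf_pos : 0 < f := div_pos (by linarith) hD
  have hf_half : 1/2 < f := by
    rw [hf, lt_div_iff₀ hD]
    nlinarith [mul_pos (show (0:ℝ) < (k:ℝ) - 1 by linarith) (show (0:ℝ) < 2 - α by linarith)]
  have hf_lt : 2 * f < α := by
    have key : 2 * (α - 1) < α * (2 + ((k:ℝ) + 1) * (α - 2)) := by nlinarith [h3]
    have h5 : 2 * f = 2 * (α - 1) / (2 + ((k:ℝ) + 1) * (α - 2)) := by rw [hf]; ring
    rw [h5, div_lt_iff₀ hD]
    linarith
  have hf_lt1 : f < 1 := by linarith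
  -- strong induction
  intro j
  induction j using Nat.strong_induction_on with
  | _ j IH =>
    rcases lt_or_ge j (k-1) with hj | hj
    · -- initial zeros
      unfold Ef
      rw [kfib_small k j hk hj]
      rw [Int.cast_zero, zero_sub, abs_neg, abs_of_pos (by positivity)]
      have he : ((j:ℤ) + 1 - k) ≤ -1 := by omega
      have hmono : α ^ ((j:ℤ) + 1 - k) ≤ α ^ (-1 : ℤ) :=
        zpow_le_zpow_right₀ (le_of_lt hα) he
      have hinv : α ^ (-1 : ℤ) = 1/α := by
        rw [zpow_neg, zpow_one, one_div]
      calc f * α ^ ((j:ℤ) + 1 - k) ≤ f * (1/α) := by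
            apply mul_le_mul_of_nonneg_left _ (le_of_lt hf_pos)
            rw [← hinv]; exact hmono
        _ < 1/2 := by
            rw [mul_one_div, div_lt_iff₀ hα0]
            linarith
    rcases eq_or_lt_of_le hj with hj' | hj'
    · -- j = k - 1
      unfold Ef
      rw [← hj', kfib_init k hk]
      have h2' : (((k-1:ℕ):ℤ) + 1 - k) = 0 := by omega
      rw [h2', zpow_zero, mul_one]
      rw [abs_lt]
      constructor <;> push_cast <;> [linarith; linarith]
    · -- j ≥ k
      have hjk : k ≤ j := by omega
      rw [Ef_star k α f hk hα hk1 hfD j hjk]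
      have hne : (Finset.range k).Nonempty := by
        rw [Finset.nonempty_range_iff]; omega
      have habs : |∑ i ∈ Finset.range k, α ^ i * Ef k α f (j - 1 - i)|
          ≤ ∑ i ∈ Finset.range k, α ^ i * |Ef k α f (j - 1 - i)| := by
        calc |∑ i ∈ Finset.range k, α ^ i * Ef k α f (j - 1 - i)|
            ≤ ∑ i ∈ Finset.range k, |α ^ i * Ef k α f (j - 1 - i)| :=
              Finset.abs_sum_le_sum_abs _ _
          _ = ∑ i ∈ Finset.range k, α ^ i * |Ef k α f (j - 1 - i)| := by
              refine Finset.sum_congr rfl fun i hi => ?_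
              rw [abs_mul, abs_of_pos (pow_pos hα0 i)]
      have hlt : ∑ i ∈ Finset.range k, α ^ i * |Ef k α f (j - 1 - i)|
          < ∑ i ∈ Finset.range k, α ^ i * (1/2) := by
        apply Finset.sum_lt_sum_of_nonempty hne
        intro i hi
        have hrec : j - 1 - i < j := by omega
        exact mul_lt_mul_of_pos_left (IH _ hrec) (pow_pos hα0 i)
      have hsum2 : ∑ i ∈ Finset.range k, α ^ i * (1/2) = α ^ k * (1/2) := by
        rw [← Finset.sum_mul, ← hroot]
      have h2α : (0:ℝ) < 2 - α := by linarith
      rw [abs_mul, abs_of_pos h2α]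
      calc (2 - α) * |∑ i ∈ Finset.range k, α ^ i * Ef k α f (j - 1 - i)|
          ≤ (2 - α) * ∑ i ∈ Finset.range k, α ^ i * |Ef k α f (j - 1 - i)| :=
            mul_le_mul_of_nonneg_left habs (le_of_lt h2α)
        _ < (2 - α) * (α ^ k * (1/2)) := by
            rw [← hsum2]
            exact mul_lt_mul_of_pos_left hlt h2α
        _ = 1/2 := by
            rw [← mul_assoc, hunit, one_mul]

/-- For every integer `k ≥ 2` and every integer `r ≥ 2 - k`,
`|F⁽ᵏ⁾_r - f_k(α) α^(r-1)| < 1/2`, where `α` is the dominant root of `Ψₖ`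
and `f_k(z) = (z - 1)/(2 + (k+1)(z - 2))`. -/
theorem kfib_dominant_term (k : ℕ) (hk : 2 ≤ k) (α : ℝ) (hα : 1 < α)
    (hroot : α ^ k = ∑ i ∈ Finset.range k, α ^ i) (r : ℤ) (hr : 2 - (k : ℤ) ≤ r) :
    |(kfib k (r + k - 2).toNat : ℝ) - (α - 1) / (2 + (k + 1) * (α - 2)) * α ^ (r - 1)| <
      1 / 2 := by
  have hj0 : (0:ℤ) ≤ r + k - 2 := by omega
  have h := Ef_abs_lt k hk α hα hroot (r + (k:ℤ) - 2).toNat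
  unfold Ef at h
  have hc : (((r + (k:ℤ) - 2).toNat : ℕ) : ℤ) = r + k - 2 := Int.toNat_of_nonneg hj0
  rw [hc] at h
  have he : r + (k:ℤ) - 2 + 1 - k = r - 1 := by ring
  rw [he] at h
  exact h
end

section
/- There are no integers ℓ ≥ 0 and t ≥ 2 such that P_ℓ = 2^t; in particular, the equation 2^{n+m−4} = P_ℓ has no solutions in positive integers n, m, ℓ with n + m ≥ 8. -/
/-- The Pell sequence: `P 0 = 0`, `P 1 = 1`, `P (ℓ+2) = 2 P (ℓ+1) + P ℓ`. -/
def pell : ℕ → ℤ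
  | 0 => 0
  | 1 => 1
  | n + 2 => 2 * pell (n + 1) + pell n

/-- Natural-number version of the Pell sequence. -/
def npell : ℕ → ℕ
  | 0 => 0
  | 1 => 1
  | n + 2 => 2 * npell (n + 1) + npell n

lemma pell_eq_npell : ∀ n, pell n = (npell n : ℤ)
  | 0 => rfl
  | 1 => rfl
  | n + 2 => by
    rw [pell, npell, pell_eq_npell (n+1), pell_eq_npell n]
    push_cast
    ring

lemma npell_pos : ∀ n, 0 < n → 0 < npell n
  | 1, _ => by decide
  | n + 2, _ => by
    have := npell_pos (n+1) (Nat.succ_pos n)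
    rw [npell]; omega

lemma npell_mod_two : ∀ n, npell n % 2 = n % 2
  | 0 => rfl
  | 1 => rfl
  | n + 2 => by
    have := npell_mod_two n
    rw [npell]; omega

/-- Double/odd index identities, proved simultaneously. -/
lemma npell_double : ∀ n,
    npell (2*n+1) = npell (n+1) ^ 2 + npell n ^ 2 ∧
      npell (2*n+2) = 2 * npell (n+1) * (npell (n+1) + npell n)
  | 0 => by decide
  | n + 1 => by
    obtain ⟨h1, h2⟩ := npell_double n
    have e3 : npell (2*(n+1)+1) = 2 * npell (2*n+2) + npell (2*n+1) := by
      have h' : 2*(n+1)+1 = (2*n+1) + 2 := by ring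
      have h'' : 2*n+1+1 = 2*n+2 := by ring
      rw [h', npell, h'']
    have e4 : npell (2*(n+1)+2) = 2 * npell (2*(n+1)+1) + npell (2*n+2) := by
      have h' : 2*(n+1)+2 = (2*n+2) + 2 := by ring
      have h'' : 2*n+2+1 = 2*(n+1)+1 := by ring
      rw [h', npell, h'']
    have ep : npell (n+2) = 2 * npell (n+1) + npell n := by rw [npell]
    constructor
    · rw [e3, h1, h2, ep]; ring
    · rw [e4, e3, h1, h2, ep]; ring

lemma main_nat : ¬ ∃ (ℓ t : ℕ), 2 ≤ t ∧ npell ℓ = 2 ^ t := by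
  rintro ⟨ℓ, t, ht, h⟩
  -- ℓ is even since 2^t is even
  have hev : ℓ % 2 = 0 := by
    have := npell_mod_two ℓ
    have h2 : npell ℓ % 2 = 0 := by
      rw [h]
      have : (2:ℕ)^t = 2 * 2^(t-1) := by
        rw [← pow_succ']
        congr 1
        omega
      omega
    omega
  obtain ⟨n, rfl⟩ : ∃ n, ℓ = 2 * n := ⟨ℓ / 2, by omega⟩
  rcases n with _ | k
  · simp [npell] at h
    exact absurd h.symm (pow_ne_zero t (by norm_num))
  · -- npell (2k+2) = 2 * npell (k+1) * (npell (k+1) + npell k) = 2^t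
    have hid := (npell_double k).2
    have h22 : 2*(k+1) = 2*k+2 := by ring
    rw [h22, hid] at h
    have hodd : (npell (k+1) + npell k) % 2 = 1 := by
      have a := npell_mod_two (k+1)
      have b := npell_mod_two k
      omega
    have hdvd : (npell (k+1) + npell k) ∣ 2 ^ t := ⟨2 * npell (k+1), by linarith [h]⟩
    have hcop : Nat.Coprime (npell (k+1) + npell k) 2 :=
      ((Nat.prime_two.coprime_iff_not_dvd).mpr (by omega)).symm
    have h1 : npell (k+1) + npell k = 1 :=
      Nat.Coprime.eq_one_of_dvd (hcop.pow_right t) hdvd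
    have hk1 : 0 < npell (k+1) := npell_pos _ (Nat.succ_pos k)
    have hk0 : npell k = 0 := by omega
    have hk : k = 0 := by
      rcases Nat.eq_zero_or_pos k with hk | hk
      · exact hk
      · exact absurd hk0 (npell_pos k hk).ne'
    subst hk
    -- npell 2 = 2 = 2^t with t ≥ 2 : contradiction
    have : (2:ℕ) = 2 ^ t := by
      norm_num [show npell 1 = 1 from rfl, show npell 0 = 0 from rfl] at h
      omega
    have : (4:ℕ) ≤ 2 ^ t := by
      calc (4:ℕ) = 2^2 := by norm_num
      _ ≤ 2^t := Nat.pow_le_pow_right (by norm_num) ht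
    omega

/-- No Pell number is of the form `2^t` with `t ≥ 2`; in particular the equation
`2^(n+m-4) = P_ℓ` has no solutions in positive integers `n, m, ℓ` with `n + m ≥ 8`. -/
theorem pell_ne_pow_two :
    (¬ ∃ (ℓ t : ℕ), 2 ≤ t ∧ pell ℓ = 2 ^ t) ∧
      ¬ ∃ (n m ℓ : ℕ), 0 < n ∧ 0 < m ∧ 0 < ℓ ∧ 8 ≤ n + m ∧ (2 : ℤ) ^ (n + m - 4) = pell ℓ := by
  have key : ¬ ∃ (ℓ t : ℕ), 2 ≤ t ∧ pell ℓ = 2 ^ t := by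
    rintro ⟨ℓ, t, ht, h⟩
    apply main_nat
    refine ⟨ℓ, t, ht, ?_⟩
    have : ((npell ℓ : ℤ)) = ((2^t : ℕ) : ℤ) := by
      rw [← pell_eq_npell, h]; push_cast; ring
    exact_mod_cast this
  refine ⟨key, ?_⟩
  rintro ⟨n, m, ℓ, hn, hm, hℓ, hnm, h⟩
  exact key ⟨ℓ, n + m - 4, by omega, h.symm⟩
end
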